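/- Let m ≥ 2 and let K₁ and K₂ be simplicial complexes on the set [m] = {1, …, m}, and let K be their deleted join, the simplicial complex on [m] ⊔ [m]' whose faces are the sets σ ∪ τ' with σ ∈ K₁, τ' ∈ K₂ (on the primed copy) and σ ∩ τ = ∅. Suppose every face of K has at most m − 1 elements. Define λ : [m] ⊔ [m]' → ℤ^{m−1} by λ(i) = λ(i') = e_i for 1 ≤ i ≤ m − 1 and λ(m) = λ(m') = e₁ + e₂ + ⋯ + e_{m−1}. Then for every face ρ of K, the family of vectors (λ(w))_{w ∈ ρ} can be extended to a ℤ-basis of ℤ^{m−1}; in particular these vectors are ℤ-linearly independent. -/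

import Mathlib

/-!
The labels of a face `σ ⊔ τ'` of the deleted join depend only on the underlying vertices in
`σ ∪ τ`, which are distinct because `σ ∩ τ = ∅`. Since the face has at most `m - 1` elements,
some vertex `x` of `[m]` is missed, and any `m - 1` of the `m` labels
`e₁, …, e_{m-1}, e₁ + ⋯ + e_{m-1}` form a basis of `ℤ^{m-1}`: for `x = m` the standard one,
otherwise the image of the standard basis under the transvection sending `e_x` to
`e₁ + ⋯ + e_{m-1}`.
-/

/-- A simplicial complex on a ground type `V`: a collection of finite subsets of `V`
containing the empty set and closed under taking subsets. -/
def IsSimplicialComplex {V : Type*} (K : Set (Finset V)) : Prop :=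
  ∅ ∈ K ∧ ∀ s ∈ K, ∀ t ⊆ s, t ∈ K

/-- A minimal non-face of `K`: not a face, but all proper subsets are faces. -/
def IsMinNonFace {V : Type*} (K : Set (Finset V)) (s : Finset V) : Prop :=
  s ∉ K ∧ ∀ t ⊂ s, t ∈ K

/-- The Alexander dual of `K`, with the primed copy `V'` identified with `V`:
faces are those `τ` with `V \ τ` not a face of `K`. -/
def alexDual {V : Type*} [Fintype V] [DecidableEq V] (K : Set (Finset V)) :
    Set (Finset V) :=
  {τ | Finset.univ \ τ ∉ K}

/-- The Bier sphere of `K`: the deleted join of `K` and its Alexander dual, a complex on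
`V ⊕ V` (left summand = `V`, right summand = the primed copy `V'`). -/
def bier {V : Type*} [Fintype V] [DecidableEq V] (K : Set (Finset V)) :
    Set (Finset (V ⊕ V)) :=
  {ρ | ∃ σ τ : Finset V, σ ∈ K ∧ τ ∈ alexDual K ∧ Disjoint σ τ ∧
    ρ = σ.image Sum.inl ∪ τ.image Sum.inr}

/-- The deleted join of two simplicial complexes on the same ground set. -/
def deletedJoin {V : Type*} [DecidableEq V] (K₁ K₂ : Set (Finset V)) :
    Set (Finset (V ⊕ V)) :=
  {ρ | ∃ σ τ : Finset V, σ ∈ K₁ ∧ τ ∈ K₂ ∧ Disjoint σ τ ∧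
    ρ = σ.image Sum.inl ∪ τ.image Sum.inr}

/-- The labelling `λ(i) = λ(i') = e_i` for `i ≤ m−1` and `λ(m) = λ(m') = e₁ + ⋯ + e_{m−1}`. -/
def bierLabel (m : ℕ) : Fin m ⊕ Fin m → (Fin (m - 1) → ℤ) :=
  Sum.elim
    (fun i => if h : (i : ℕ) < m - 1 then Pi.single (⟨(i : ℕ), h⟩ : Fin (m - 1)) (1 : ℤ) else 1)
    (fun i => if h : (i : ℕ) < m - 1 then Pi.single (⟨(i : ℕ), h⟩ : Fin (m - 1)) (1 : ℤ) else 1)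

section

variable {ι M : Type*}

def ExtendsToBasis (κ R : Type*) [Semiring R] [AddCommMonoid M] [Module R M] (v : ι → M) :
    Prop :=
  ∃ b : Module.Basis κ R M, ∃ g : ι → κ, Function.Injective g ∧ ∀ i, b (g i) = v i

theorem ExtendsToBasis.comp {κ R ι' : Type*} [Semiring R] [AddCommMonoid M] [Module R M]
    {v : ι → M} (hv : ExtendsToBasis κ R v) (f : ι' → ι) (hf : Function.Injective f) :
    ExtendsToBasis κ R (v ∘ f) :=
  let ⟨b, g, hg, hb⟩ := hv
  ⟨b, g ∘ f, hg.comp hf, fun i => hb (f i)⟩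

variable (R : Type*) [CommRing R] [Fintype ι] [DecidableEq ι]

noncomputable def basisOnesAt (j : ι) : Module.Basis ι R (ι → R) :=
  (Pi.basisFun R ι).map <| LinearEquiv.transvection
    (f := LinearMap.proj j) (v := 1 - Pi.single j 1) (by simp)

theorem basisOnesAt_self (j : ι) : basisOnesAt R j j = 1 := by
  simp [basisOnesAt, LinearMap.transvection.apply]

theorem basisOnesAt_of_ne {i j : ι} (h : i ≠ j) : basisOnesAt R j i = Pi.single i 1 := by
  simp [basisOnesAt, LinearMap.transvection.apply, h]

end

def vertexLabel (m : ℕ) (i : Fin m) : Fin (m - 1) → ℤ :=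
  if h : (i : ℕ) < m - 1 then Pi.single ⟨i, h⟩ 1 else 1

theorem bierLabel_eq_comp (m : ℕ) :
    bierLabel m = vertexLabel m ∘ Sum.elim id id := by
  funext w; cases w <;> rfl

theorem extendsToBasis_vertexLabel_ne {m : ℕ} (x : Fin m) :
    ExtendsToBasis (Fin (m - 1)) ℤ (fun v : {v // v ≠ x} => vertexLabel m v) := by
  have hval : ∀ v : {v // v ≠ x}, (v : ℕ) ≠ x := fun v h => v.2 (Fin.ext h)
  by_cases hx : (x : ℕ) < m - 1
  · -- the label `1` of the last vertex takes the place of `e_x`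
    let j : Fin (m - 1) := ⟨x, hx⟩
    refine ⟨basisOnesAt ℤ j, fun v => if h : (v : ℕ) < m - 1 then ⟨v, h⟩ else j, ?_, ?_⟩
    · intro v w hvw
      have hvw := Fin.ext_iff.1 hvw
      have := hval v; have := hval w; have := v.1.isLt; have := w.1.isLt
      ext; dsimp only at hvw; split_ifs at hvw <;> simp only [j] at hvw <;> omega
    · intro v
      by_cases hv : (v : ℕ) < m - 1
      · simp only [vertexLabel, dif_pos hv]
        exact basisOnesAt_of_ne ℤ fun h => hval v (congrArg Fin.val h :)
      · simp only [vertexLabel, dif_neg hv]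
        exact basisOnesAt_self ℤ j
  · have hv : ∀ v : {v // v ≠ x}, (v : ℕ) < m - 1 := fun v => by
      have := hval v; omega
    refine ⟨Pi.basisFun ℤ _, fun v => ⟨v, hv v⟩, fun v w h => ?_, fun v => ?_⟩
    · exact Subtype.ext (Fin.ext (congrArg Fin.val h :))
    · simp [vertexLabel, hv v]

theorem extendsToBasis_vertexLabel_of_card_le {m : ℕ} {s : Finset (Fin m)}
    (hs : s.card ≤ m - 1) :
    ExtendsToBasis (Fin (m - 1)) ℤ (fun v : s => vertexLabel m v) := by
  rcases Nat.eq_zero_or_pos m with rfl | hm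
  · exact ⟨Pi.basisFun ℤ _, fun v => v.1.elim0, fun v => v.1.elim0, fun v => v.1.elim0⟩
  obtain ⟨x, -, hx⟩ := Finset.exists_mem_notMem_of_card_lt_card (s := s) (t := Finset.univ)
    (by simp only [Finset.card_univ, Fintype.card_fin]; omega)
  exact (extendsToBasis_vertexLabel_ne x).comp (fun v : s => ⟨v, ne_of_mem_of_not_mem v.2 hx⟩)
    fun v w h => Subtype.ext (congrArg Subtype.val h :)

theorem injOn_elim_id_id_of_mem_deletedJoin {V : Type*} [DecidableEq V]
    {K₁ K₂ : Set (Finset V)} {ρ : Finset (V ⊕ V)} (hρ : ρ ∈ deletedJoin K₁ K₂) :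
    Set.InjOn (Sum.elim id id) (ρ : Set (V ⊕ V)) := by
  obtain ⟨σ, τ, -, -, hdisj, rfl⟩ := hρ
  intro v hv w hw hvw
  simp only [Finset.coe_union, Finset.coe_image, Set.mem_union, Set.mem_image,
    Finset.mem_coe] at hv hw
  rcases hv with ⟨a, ha, rfl⟩ | ⟨a, ha, rfl⟩ <;> rcases hw with ⟨b, hb, rfl⟩ | ⟨b, hb, rfl⟩ <;>
    simp only [Sum.elim_inl, Sum.elim_inr, id] at hvw <;> subst hvw
  · rfl
  · exact absurd hb (Finset.disjoint_left.1 hdisj ha)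
  · exact absurd ha (Finset.disjoint_left.1 hdisj hb)
  · rfl

theorem deletedJoin_labels_extend_to_basis_general (m : ℕ)
    (K₁ K₂ : Set (Finset (Fin m)))
    (hdim : ∀ ρ ∈ deletedJoin K₁ K₂, ρ.card ≤ m - 1) :
    ∀ ρ ∈ deletedJoin K₁ K₂,
      ∃ b : Module.Basis (Fin (m - 1)) ℤ (Fin (m - 1) → ℤ),
        ∃ g : {w // w ∈ ρ} → Fin (m - 1), Function.Injective g ∧
          ∀ w : {w // w ∈ ρ}, b (g w) = bierLabel m (w : Fin m ⊕ Fin m) := by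
  intro ρ hρ
  have hinj := injOn_elim_id_id_of_mem_deletedJoin hρ
  have hs : (ρ.image (Sum.elim id id)).card ≤ m - 1 :=
    (Finset.card_image_of_injOn hinj).trans_le (hdim ρ hρ)
  rw [bierLabel_eq_comp]
  exact (extendsToBasis_vertexLabel_of_card_le hs).comp
    (fun w : ρ => ⟨_, Finset.mem_image_of_mem _ w.2⟩)
    fun v w h => Subtype.ext (hinj v.2 w.2 (congrArg Subtype.val h))

/-- if every face of the deleted join of `K₁` and `K₂` has at most `m − 1`
elements, then for every face `ρ`, the family `(λ(w))_{w ∈ ρ}` extends to a `ℤ`-basis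
of `ℤ^{m−1}`. -/
theorem deletedJoin_labels_extend_to_basis (m : ℕ) (hm : 2 ≤ m)
    (K₁ K₂ : Set (Finset (Fin m)))
    (h₁ : IsSimplicialComplex K₁) (h₂ : IsSimplicialComplex K₂)
    (hdim : ∀ ρ ∈ deletedJoin K₁ K₂, ρ.card ≤ m - 1) :
    ∀ ρ ∈ deletedJoin K₁ K₂,
      ∃ b : Module.Basis (Fin (m - 1)) ℤ (Fin (m - 1) → ℤ),
        ∃ g : {w // w ∈ ρ} → Fin (m - 1), Function.Injective g ∧
          ∀ w : {w // w ∈ ρ}, b (g w) = bierLabel m (w : Fin m ⊕ Fin m) :=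
  deletedJoin_labels_extend_to_basis_general m K₁ K₂ hdim
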